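/- arXiv:1210.2145 — 2 statements merged into one kernel-verified Lean document; each statement's English description precedes it below -/
import Mathlib

section
/- Explicit resolvent of a weighted distance function: let (H,d) be a Hadamard space, a ∈ H, w > 0, λ > 0, and x ∈ H with x ≠ a. Then the function y ↦ w·d(y,a) + (1/(2λ))·d(x,y)² attains its minimum over H at the unique point (1−t)x ⊕ ta, where t = min{1, λw/d(a,x)}, and at no other point. -/
open Filter Topology

/-- A Hadamard space structure on a metric space `H`: a geodesic combination map
`geo x y t = (1-t)x ⊕ ty` satisfying the geodesic axioms and the CAT(0) inequality.
(Completeness is imposed via the `CompleteSpace` instance in the theorems.) -/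
structure Hadamard (H : Type*) [MetricSpace H] : Type _ where
  geo : H → H → ℝ → H
  geo_zero : ∀ x y : H, geo x y 0 = x
  geo_one : ∀ x y : H, geo x y 1 = y
  geo_dist : ∀ x y : H, ∀ s ∈ Set.Icc (0 : ℝ) 1, ∀ t ∈ Set.Icc (0 : ℝ) 1,
    dist (geo x y s) (geo x y t) = |s - t| * dist x y
  cat0 : ∀ z x y : H, ∀ t ∈ Set.Icc (0 : ℝ) 1,
    dist z (geo x y t) ^ 2
      ≤ (1 - t) * dist z x ^ 2 + t * dist z y ^ 2 - t * (1 - t) * dist x y ^ 2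

/-- A function `f : H → (-∞,∞]` is (geodesically) convex if along every geodesic
`t ↦ (1-t)x ⊕ ty` it satisfies the convexity inequality. -/
def GeoConvex {H : Type*} [MetricSpace H] (G : Hadamard H) (f : H → EReal) : Prop :=
  ∀ x y : H, ∀ t ∈ Set.Icc (0 : ℝ) 1,
    f (G.geo x y t) ≤ ((1 - t : ℝ) : EReal) * f x + ((t : ℝ) : EReal) * f y

set_option maxHeartbeats 2000000 in
/-- Explicit resolvent of a weighted distance function: for `x ≠ a`, the function
`y ↦ w·d(y,a) + (1/(2λ))·d(x,y)²` attains its minimum exactly at the point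
`(1-t)x ⊕ ta` with `t = min {1, λw/d(a,x)}`. -/
theorem resolvent_of_weighted_dist
    {H : Type*} [MetricSpace H] [CompleteSpace H] (G : Hadamard H)
    (a x : H) (w lam : ℝ) (hw : 0 < w) (hlam : 0 < lam) (hxa : x ≠ a) :
    (∀ y : H,
      w * dist (G.geo x a (min 1 (lam * w / dist a x))) a
          + 1 / (2 * lam) * dist x (G.geo x a (min 1 (lam * w / dist a x))) ^ 2
        ≤ w * dist y a + 1 / (2 * lam) * dist x y ^ 2) ∧
    (∀ y : H,
      (∀ z : H, w * dist y a + 1 / (2 * lam) * dist x y ^ 2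
          ≤ w * dist z a + 1 / (2 * lam) * dist x z ^ 2) →
        y = G.geo x a (min 1 (lam * w / dist a x))) := by
  set D := dist a x with hDdef
  have hD : 0 < D := dist_pos.2 (fun h => hxa h.symm)
  set t := min 1 (lam * w / D) with htdef
  have htpos : 0 < lam * w / D := div_pos (mul_pos hlam hw) hD
  have ht0 : 0 ≤ t := le_min zero_le_one htpos.le
  have ht1 : t ≤ 1 := min_le_left _ _
  set p := G.geo x a t with hpdef
  have hxp : dist x p = t * D := by
    have h := G.geo_dist x a 0 ⟨le_refl 0, zero_le_one⟩ t ⟨ht0, ht1⟩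
    rw [G.geo_zero] at h
    rw [hpdef, h, zero_sub, abs_neg, abs_of_nonneg ht0, dist_comm x a]
  have hpa : dist p a = (1 - t) * D := by
    have h := G.geo_dist x a t ⟨ht0, ht1⟩ 1 ⟨zero_le_one, le_refl 1⟩
    rw [G.geo_one] at h
    rw [hpdef, h, abs_sub_comm, abs_of_nonneg (by linarith), dist_comm x a]
  have h2lam : (0:ℝ) < 2 * lam := by linarith
  -- key values
  constructor
  · intro y
    have h1 : D - dist x y ≤ dist y a := by
      have := dist_triangle a y x
      rw [dist_comm a y, dist_comm y x] at this
      linarith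
    have hs0 : 0 ≤ dist x y := dist_nonneg
    have hya0 : 0 ≤ dist y a := dist_nonneg
    rw [hpa, hxp, ← sub_nonneg]
    rcases le_or_gt (lam * w / D) 1 with hc | hc
    · have ht' : t = lam * w / D := min_eq_right hc
      have htD : t * D = lam * w := by rw [ht']; field_simp
      have expand : w * dist y a + 1 / (2 * lam) * dist x y ^ 2
          - (w * ((1 - t) * D) + 1 / (2 * lam) * (t * D) ^ 2)
          = w * (dist y a - (D - dist x y))
            + 1 / (2 * lam) * (dist x y - lam * w) ^ 2 := by
        have h1t : (1 - t) * D = D - lam * w := by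
          rw [sub_mul, one_mul, htD]
        rw [h1t, htD]
        field_simp
        ring
      rw [expand]
      have hinv : (0:ℝ) ≤ 1 / (2 * lam) := by positivity
      have h2 := mul_nonneg hw.le (by linarith : (0:ℝ) ≤ dist y a - (D - dist x y))
      nlinarith [mul_nonneg hinv (sq_nonneg (dist x y - lam * w))]
    · have ht' : t = 1 := min_eq_left hc.le
      have hDlw : D < lam * w := (one_lt_div hD).mp hc
      rw [ht']
      rcases le_or_gt D (dist x y) with hsD | hsD
      · have : D ^ 2 ≤ dist x y ^ 2 := by nlinarith
        have hinv : 0 < 1 / (2 * lam) := by positivity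
        nlinarith [mul_nonneg hw.le hya0, mul_le_mul_of_nonneg_left this hinv.le]
      · have hinv : 0 < 1 / (2 * lam) := by positivity
        have key : 1 / (2 * lam) * (D ^ 2 - dist x y ^ 2) ≤ w * (D - dist x y) := by
          rw [div_mul_eq_mul_div, div_le_iff₀ h2lam]
          nlinarith
        nlinarith [mul_le_mul_of_nonneg_left h1 hw.le]
  · intro y hy
    have hle := hy p
    rw [hpa, hxp] at hle
    have h1 : D - dist x y ≤ dist y a := by
      have := dist_triangle a y x
      rw [dist_comm a y, dist_comm y x] at this
      linarith
    have hs0 : 0 ≤ dist x y := dist_nonneg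
    have hya0 : 0 ≤ dist y a := dist_nonneg
    rcases le_or_gt (lam * w / D) 1 with hc | hc
    · have ht' : t = lam * w / D := min_eq_right hc
      have htD : t * D = lam * w := by rw [ht']; field_simp
      -- derive s = lam*w and dist y a = D - s
      have h1t : (1 - t) * D = D - lam * w := by
        rw [sub_mul, one_mul, htD]
      have expand : w * dist y a + 1 / (2 * lam) * dist x y ^ 2
          - (w * ((1 - t) * D) + 1 / (2 * lam) * (t * D) ^ 2)
          = w * (dist y a - (D - dist x y))
            + 1 / (2 * lam) * (dist x y - lam * w) ^ 2 := by
        rw [h1t, htD]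
        field_simp
        ring
      have h2 : 0 ≤ w * (dist y a - (D - dist x y)) :=
        mul_nonneg hw.le (by linarith)
      have hinv : 0 < 1 / (2 * lam) := by positivity
      have hcsq : 1 / (2 * lam) * (dist x y - lam * w) ^ 2 ≤ 0 := by linarith
      have hsq : (dist x y - lam * w) ^ 2 ≤ 0 := by
        nlinarith [sq_nonneg (dist x y - lam * w)]
      have hseq : dist x y = lam * w := by nlinarith [sq_nonneg (dist x y - lam * w)]
      have hya : dist y a = D - dist x y := by nlinarith
      -- use CAT(0) to conclude y = p
      have hc0 := G.cat0 y x a t ⟨ht0, ht1⟩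
      rw [dist_comm y x, dist_comm x a] at hc0
      rw [hya, hseq] at hc0
      have hrhs : (1 - t) * (lam * w) ^ 2 + t * (D - lam * w) ^ 2
          - t * (1 - t) * D ^ 2 = 0 := by
        have : lam * w = t * D := htD.symm
        rw [this]; ring
      have hd2 : dist y p ^ 2 ≤ 0 := by rw [hpdef]; nlinarith [hc0, hrhs]
      have : dist y p = 0 := by nlinarith [dist_nonneg (x := y) (y := p)]
      rw [hpdef] at this
      exact dist_eq_zero.mp this
    · have ht' : t = 1 := min_eq_left hc.le
      have hDlw : D < lam * w := (one_lt_div hD).mp hc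
      rw [ht'] at hle
      have hinv : 0 < 1 / (2 * lam) := by positivity
      have hsD : dist x y ≤ D := by
        by_contra h
        push_neg at h
        have h2 : D ^ 2 < dist x y ^ 2 := by nlinarith
        nlinarith [mul_nonneg hw.le hya0, mul_lt_mul_of_pos_left h2 hinv]
      have hsD' : D ≤ dist x y := by
        by_contra h
        push_neg at h
        have k1 : w * (D - dist x y) ≤ 1 / (2 * lam) * (D ^ 2 - dist x y ^ 2) := by
          nlinarith [mul_le_mul_of_nonneg_left h1 hw.le]
        rw [div_mul_eq_mul_div, le_div_iff₀ h2lam] at k1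
        nlinarith
      have hsD2 : dist x y = D := le_antisymm hsD hsD'
      have hya : dist y a = 0 := by
        rw [hsD2] at hle
        nlinarith
      have hy_eq : y = a := dist_eq_zero.mp hya
      have hpa' : p = a := by rw [hpdef, ht', G.geo_one]
      rw [hy_eq]
      exact hpa'.symm
end

section
/- Quantitative law of large numbers estimate: let (H,d) be a Hadamard space, a₁,…,a_N ∈ H, w₁,…,w_N positive weights with Σₙ wₙ = 1, Ξ the unique minimizer of x ↦ Σₙ wₙ·d(x,aₙ)², and ξ = Σₙ wₙ·d(Ξ,aₙ)² its minimum value. On a probability space, let (Y_k)_{k∈ℕ} be independent H-valued random variables, each taking the value aₙ with probability wₙ for n = 1,…,N. Define S₁ := Y₁ and S_{k+1} := (1 − 1/(k+1))S_k ⊕ (1/(k+1))Y_{k+1} for k ∈ ℕ. Then for every k ∈ ℕ, E[d(Ξ,S_k)²] ≤ ξ/k. -/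
open Filter Topology

open MeasureTheory ProbabilityTheory

/-!
Let `M k` be the inductive mean of the first `k + 1` samples and `F x = E[d(x, Y)²]`, so that
`ξ = F Ξ`. The CAT(0) inequality at `Ξ` for the step `M (k + 1) = (1 - t) M k ⊕ t Y` with
`t = 1 / (k + 2)` gives
`E d(Ξ, M (k+1))² ≤ (1 - t) E d(Ξ, M k)² + t ξ - t (1 - t) E d(M k, Y)²`.
The new sample is independent of `M k`, so the last expectation is `E F(M k)`, and the variance
inequality `F x ≥ ξ + d(Ξ, x)²` (the CAT(0) inequality once more, at the minimiser) bounds it below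
by `ξ + E d(Ξ, M k)²`. Hence `e k = E d(Ξ, M k)²` satisfies `e (k+1) ≤ (1 - t)² e k + t² ξ`,
which solves to `e k ≤ ξ / (k + 1)`.

Nothing is assumed about the measurability of the geodesic map, but the samples lie in the finite
set `{a n}` almost surely: after retracting them onto it, every function of finitely many samples
is measurable.
-/

namespace Set

variable {α : Type*} (s : Set α) (x₀ : s)

open Classical in
noncomputable def retraction (x : α) : s := if h : x ∈ s then ⟨x, h⟩ else x₀

variable {s}

lemma coe_retraction_of_mem {x : α} (hx : x ∈ s) : (retraction s x₀ x : α) = x := by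
  rw [retraction, dif_pos hx]

end Set

lemma measurable_retraction {α : Type*} [MeasurableSpace α] {s : Set α} (x₀ : s)
    (hs : MeasurableSet s) : Measurable (s.retraction x₀) := by
  classical
  exact Measurable.dite measurable_id measurable_const hs

section FinitelySupported

variable {α : Type*} [MeasurableSpace α] [MeasurableSingletonClass α] {N : ℕ} (a : Fin N → α)
  (w : Fin N → ℝ)

lemma ae_mem_range_of_map_eq_sum_dirac {Ω : Type*} {m0 : MeasurableSpace Ω} {μ : Measure Ω}
    {Y : Ω → α} (hY : Measurable Y)
    (hlaw : μ.map Y = ∑ n, ENNReal.ofReal (w n) • Measure.dirac (a n)) :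
    ∀ᵐ ω ∂μ, Y ω ∈ Set.range a := by
  refine ae_of_ae_map hY.aemeasurable ?_
  rw [hlaw, ae_iff]
  simp

lemma integral_sum_smul_dirac (hw : ∀ n, 0 ≤ w n) (f : α → ℝ) :
    ∫ x, f x ∂(∑ n, ENNReal.ofReal (w n) • Measure.dirac (a n)) = ∑ n, w n * f (a n) := by
  rw [integral_finsetSum_measure fun n _ => (integrable_dirac (by simp)).smul_measure (by simp)]
  simp [integral_smul_measure, ENNReal.toReal_ofReal (hw _)]

end FinitelySupported

section Independence

variable {Ω β γ : Type*} {m0 : MeasurableSpace Ω} {μ : Measure Ω}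
  [MeasurableSpace β] [MeasurableSingletonClass β] [Finite β]
  [MeasurableSpace γ] [MeasurableSingletonClass γ] [Finite γ]

lemma integrable_comp_of_finite [IsFiniteMeasure μ] {T : Ω → β} (hT : Measurable T) (φ : β → ℝ) :
    Integrable (fun ω => φ (T ω)) μ :=
  Integrable.of_finite.comp_measurable hT

lemma ProbabilityTheory.IndepFun.integral_comp₂_eq_integral_integral [IsFiniteMeasure μ]
    {T : Ω → β} {Z : Ω → γ} (hTZ : IndepFun T Z μ) (hT : Measurable T) (hZ : Measurable Z)
    (Φ : β → γ → ℝ) :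
    ∫ ω, Φ (T ω) (Z ω) ∂μ = ∫ ω, ∫ ω', Φ (T ω) (Z ω') ∂μ ∂μ := by
  calc ∫ ω, Φ (T ω) (Z ω) ∂μ = ∫ q, Function.uncurry Φ q ∂(μ.map fun ω => (T ω, Z ω)) :=
        (integral_map (hT.prodMk hZ).aemeasurable
          (measurable_of_finite (Function.uncurry Φ)).aestronglyMeasurable).symm
    _ = ∫ b, ∫ c, Φ b c ∂(μ.map Z) ∂(μ.map T) := by
        rw [(indepFun_iff_map_prod_eq_prod_map_map hT.aemeasurable hZ.aemeasurable).mp hTZ,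
          integral_prod _ Integrable.of_finite]
        rfl
    _ = ∫ ω, ∫ ω', Φ (T ω) (Z ω') ∂μ ∂μ := by
        rw [integral_map hT.aemeasurable (measurable_of_finite _).aestronglyMeasurable]
        simp_rw [integral_map hZ.aemeasurable (measurable_of_finite _).aestronglyMeasurable]

end Independence

lemma ProbabilityTheory.iIndepFun.indepFun_finTuple {Ω β : Type*} {m0 : MeasurableSpace Ω}
    {μ : Measure Ω} [MeasurableSpace β] {X : ℕ → Ω → β} (hind : iIndepFun X μ)
    (hX : ∀ i, Measurable (X i)) (k : ℕ) :
    IndepFun (fun ω (i : Fin (k + 1)) => X i ω) (X (k + 1)) μ := by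
  have h := hind.indepFun_finset (Finset.range (k + 1)) {k + 1} (by simp) hX
  exact h.comp (φ := fun u (i : Fin (k + 1)) => u ⟨i, Finset.mem_range.mpr i.isLt⟩)
    (ψ := fun u => u ⟨k + 1, Finset.mem_singleton_self _⟩) (_mγ' := ‹_›) (by fun_prop)
    (by fun_prop)

noncomputable def frechetFun {H V : Type*} [MetricSpace H] [MeasurableSpace V] (p : V → H)
    (ν : Measure V) (x : H) : ℝ :=
  ∫ v, dist x (p v) ^ 2 ∂ν

namespace Hadamard

variable {H : Type*} [MetricSpace H] (G : Hadamard H)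

noncomputable def inductiveMean : (k : ℕ) → (Fin (k + 1) → H) → H
  | 0, y => y 0
  | k + 1, y => G.geo (inductiveMean k (Fin.init y)) (y (Fin.last (k + 1))) (1 / ((k : ℝ) + 2))

lemma inductiveMean_succ (k : ℕ) (y : Fin (k + 2) → H) :
    G.inductiveMean (k + 1) y =
      G.geo (G.inductiveMean k (Fin.init y)) (y (Fin.last (k + 1))) (1 / ((k : ℝ) + 2)) := rfl

lemma inductiveMean_eq_of_forall_succ_eq {s y : ℕ → H} (h₁ : s 1 = y 1)
    (hrec : ∀ k, 1 ≤ k → s (k + 1) = G.geo (s k) (y (k + 1)) (1 / ((k : ℝ) + 1))) (k : ℕ) :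
    G.inductiveMean k (fun i => y (i + 1)) = s (k + 1) := by
  induction k with
  | zero => exact h₁.symm
  | succ k ih =>
    rw [inductiveMean_succ, hrec (k + 1) (by omega), ← ih]
    congr 1
    push_cast
    ring

lemma add_dist_sq_le_of_forall_le {F : H → ℝ}
    (hF : ∀ x y, ∀ t ∈ Set.Icc (0 : ℝ) 1,
      F (G.geo x y t) ≤ (1 - t) * F x + t * F y - t * (1 - t) * dist x y ^ 2)
    {Ξ : H} (hΞ : ∀ x, F Ξ ≤ F x) (x : H) : F Ξ + dist Ξ x ^ 2 ≤ F x := by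
  have hlim : Tendsto (fun t : ℝ => F Ξ + (1 - t) * dist Ξ x ^ 2) (𝓝[>] 0)
      (𝓝 (F Ξ + (1 - 0) * dist Ξ x ^ 2)) :=
    ((continuous_const.add ((continuous_const.sub continuous_id).mul continuous_const)).tendsto
      0).mono_left nhdsWithin_le_nhds
  refine (le_of_tendsto hlim ?_).trans_eq' (by ring)
  filter_upwards [Ioc_mem_nhdsGT one_pos] with t ⟨ht₀, ht₁⟩
  -- compare `Ξ` with the point at parameter `t` on the geodesic to `x`, then divide by `t`
  have := (hΞ _).trans (hF Ξ x t ⟨ht₀.le, ht₁⟩)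
  nlinarith

variable {V : Type*} [MeasurableSpace V] [MeasurableSingletonClass V] [Finite V] (p : V → H)

lemma frechetFun_geo_le (ν : Measure V) [IsProbabilityMeasure ν] (x y : H) {t : ℝ}
    (ht : t ∈ Set.Icc (0 : ℝ) 1) :
    frechetFun p ν (G.geo x y t) ≤
      (1 - t) * frechetFun p ν x + t * frechetFun p ν y - t * (1 - t) * dist x y ^ 2 := by
  calc frechetFun p ν (G.geo x y t)
      ≤ ∫ v, (1 - t) * dist x (p v) ^ 2 + t * dist y (p v) ^ 2 - t * (1 - t) * dist x y ^ 2 ∂ν :=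
        integral_mono Integrable.of_finite Integrable.of_finite fun v => by
          simpa only [dist_comm (p v)] using G.cat0 (p v) x y t ht
    _ = _ := by
        rw [integral_sub Integrable.of_finite (integrable_const _), integral_add
          Integrable.of_finite Integrable.of_finite, integral_const_mul, integral_const_mul,
          integral_const, probReal_univ, one_smul, frechetFun, frechetFun]

variable {Ω : Type*} {m0 : MeasurableSpace Ω} {μ : Measure Ω} [IsProbabilityMeasure μ]
  {X : ℕ → Ω → V} {ν : Measure V}

lemma frechetFun_add_integral_dist_sq_inductiveMean_le (hX : ∀ i, Measurable (X i))
    (hind : iIndepFun X μ) (hlaw : ∀ i, HasLaw (X i) ν μ) {Ξ : H}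
    (hΞ : ∀ x, frechetFun p ν Ξ ≤ frechetFun p ν x) (k : ℕ) :
    frechetFun p ν Ξ + ∫ ω, dist Ξ (G.inductiveMean k fun i => p (X i ω)) ^ 2 ∂μ ≤
      ∫ ω, dist (G.inductiveMean k fun i => p (X i ω)) (p (X (k + 1) ω)) ^ 2 ∂μ := by
  have := (hlaw 0).isProbabilityMeasure_iff.mp ‹_›
  set M : Ω → H := fun ω => G.inductiveMean k fun i => p (X i ω)
  have hint : ∀ φ : (Fin (k + 1) → V) → ℝ, Integrable (fun ω => φ fun i => X i ω) μ :=
    integrable_comp_of_finite (by fun_prop)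
  have hM : Integrable (fun ω => dist Ξ (M ω) ^ 2) μ :=
    hint fun u => dist Ξ (G.inductiveMean k (p ∘ u)) ^ 2
  calc frechetFun p ν Ξ + ∫ ω, dist Ξ (M ω) ^ 2 ∂μ
      = ∫ ω, frechetFun p ν Ξ + dist Ξ (M ω) ^ 2 ∂μ := by
        rw [integral_add (integrable_const _) hM, integral_const, probReal_univ, one_smul]
    _ ≤ ∫ ω, frechetFun p ν (M ω) ∂μ :=
        integral_mono ((integrable_const _).add hM)
          (hint fun u => frechetFun p ν (G.inductiveMean k (p ∘ u)))
          fun ω => G.add_dist_sq_le_of_forall_le (frechetFun_geo_le G p ν) hΞ (M ω)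
    _ = ∫ ω, ∫ ω', dist (M ω) (p (X (k + 1) ω')) ^ 2 ∂μ ∂μ :=
        integral_congr_ae <| .of_forall fun ω =>
          ((hlaw (k + 1)).integral_comp (f := fun v => dist (M ω) (p v) ^ 2)
            (measurable_of_finite _).aestronglyMeasurable).symm
    -- `M` is independent of the new sample `X (k + 1)`
    _ = ∫ ω, dist (M ω) (p (X (k + 1) ω)) ^ 2 ∂μ :=
        ((hind.indepFun_finTuple hX k).integral_comp₂_eq_integral_integral (by fun_prop) (hX _)
          fun u v => dist (G.inductiveMean k (p ∘ u)) (p v) ^ 2).symm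

lemma integral_dist_sq_inductiveMean_succ_le (hX : ∀ i, Measurable (X i))
    (hind : iIndepFun X μ) (hlaw : ∀ i, HasLaw (X i) ν μ) {Ξ : H}
    (hΞ : ∀ x, frechetFun p ν Ξ ≤ frechetFun p ν x) (k : ℕ) :
    ∫ ω, dist Ξ (G.inductiveMean (k + 1) fun i => p (X i ω)) ^ 2 ∂μ ≤
      (1 - 1 / ((k : ℝ) + 2)) ^ 2 * ∫ ω, dist Ξ (G.inductiveMean k fun i => p (X i ω)) ^ 2 ∂μ
        + (1 / ((k : ℝ) + 2)) ^ 2 * frechetFun p ν Ξ := by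
  set t : ℝ := 1 / ((k : ℝ) + 2) with ht_def
  have ht : t ∈ Set.Icc (0 : ℝ) 1 := ⟨by positivity, by
    rw [ht_def, div_le_one (by positivity)]; linarith [(k.cast_nonneg : (0 : ℝ) ≤ k)]⟩
  set M : Ω → H := fun ω => G.inductiveMean k fun i => p (X i ω)
  have hint : ∀ φ : (Fin (k + 2) → V) → ℝ, Integrable (fun ω => φ fun i => X i ω) μ :=
    integrable_comp_of_finite (by fun_prop)
  have hM' : Integrable (fun ω => dist Ξ (G.geo (M ω) (p (X (k + 1) ω)) t) ^ 2) μ :=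
    hint fun u => dist Ξ (G.inductiveMean (k + 1) (p ∘ u)) ^ 2
  have hM : Integrable (fun ω => dist Ξ (M ω) ^ 2) μ :=
    hint fun u => dist Ξ (G.inductiveMean k fun i => p (u i.castSucc)) ^ 2
  have hY : Integrable (fun ω => dist Ξ (p (X (k + 1) ω)) ^ 2) μ :=
    hint fun u => dist Ξ (p (u (Fin.last _))) ^ 2
  have hC : Integrable (fun ω => dist (M ω) (p (X (k + 1) ω)) ^ 2) μ :=
    hint fun u => dist (G.inductiveMean k fun i => p (u i.castSucc)) (p (u (Fin.last _))) ^ 2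
  have hsample : ∫ ω, dist Ξ (p (X (k + 1) ω)) ^ 2 ∂μ = frechetFun p ν Ξ :=
    (hlaw (k + 1)).integral_comp (f := fun v => dist Ξ (p v) ^ 2)
      (measurable_of_finite _).aestronglyMeasurable
  have hcross := G.frechetFun_add_integral_dist_sq_inductiveMean_le p hX hind hlaw hΞ k
  calc ∫ ω, dist Ξ (G.inductiveMean (k + 1) fun i => p (X i ω)) ^ 2 ∂μ
      = ∫ ω, dist Ξ (G.geo (M ω) (p (X (k + 1) ω)) t) ^ 2 ∂μ := rfl
    _ ≤ ∫ ω, (1 - t) * dist Ξ (M ω) ^ 2 + t * dist Ξ (p (X (k + 1) ω)) ^ 2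
          - t * (1 - t) * dist (M ω) (p (X (k + 1) ω)) ^ 2 ∂μ :=
        integral_mono hM' (((hM.const_mul _).add (hY.const_mul _)).sub (hC.const_mul _))
          fun ω => G.cat0 Ξ (M ω) (p (X (k + 1) ω)) t ht
    _ = (1 - t) * ∫ ω, dist Ξ (M ω) ^ 2 ∂μ + t * frechetFun p ν Ξ
          - t * (1 - t) * ∫ ω, dist (M ω) (p (X (k + 1) ω)) ^ 2 ∂μ := by
        rw [integral_sub _ (hC.const_mul _), integral_add (hM.const_mul _) (hY.const_mul _),
          integral_const_mul, integral_const_mul, integral_const_mul, hsample]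
        exact (hM.const_mul _).add (hY.const_mul _)
    _ ≤ (1 - t) ^ 2 * ∫ ω, dist Ξ (M ω) ^ 2 ∂μ + t ^ 2 * frechetFun p ν Ξ := by
        nlinarith [mul_le_mul_of_nonneg_left hcross (mul_nonneg ht.1 (sub_nonneg.mpr ht.2))]

theorem integral_dist_sq_inductiveMean_le (hX : ∀ i, Measurable (X i))
    (hind : iIndepFun X μ) (hlaw : ∀ i, HasLaw (X i) ν μ) {Ξ : H}
    (hΞ : ∀ x, frechetFun p ν Ξ ≤ frechetFun p ν x) (k : ℕ) :
    ∫ ω, dist Ξ (G.inductiveMean k fun i => p (X i ω)) ^ 2 ∂μ ≤ frechetFun p ν Ξ / (k + 1) := by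
  induction k with
  | zero =>
    exact ((hlaw 0).integral_comp (f := fun v => dist Ξ (p v) ^ 2)
      (measurable_of_finite _).aestronglyMeasurable).le.trans_eq (by simp [frechetFun])
  | succ k ih =>
    refine (G.integral_dist_sq_inductiveMean_succ_le p hX hind hlaw hΞ k).trans ?_
    calc (1 - 1 / ((k : ℝ) + 2)) ^ 2 * ∫ ω, dist Ξ (G.inductiveMean k fun i => p (X i ω)) ^ 2 ∂μ
          + (1 / ((k : ℝ) + 2)) ^ 2 * frechetFun p ν Ξ
        ≤ (1 - 1 / ((k : ℝ) + 2)) ^ 2 * (frechetFun p ν Ξ / (k + 1))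
          + (1 / ((k : ℝ) + 2)) ^ 2 * frechetFun p ν Ξ := by gcongr
      _ = frechetFun p ν Ξ / ((k + 1 : ℕ) + 1) := by
        push_cast
        field_simp
        ring

end Hadamard

theorem lln_quantitative_estimate_general
    {H : Type*} [MetricSpace H]
    [MeasurableSpace H] [BorelSpace H]
    (G : Hadamard H)
    {Ω : Type*} {m0 : MeasurableSpace Ω} {μ : Measure Ω} [IsProbabilityMeasure μ]
    (N : ℕ) (a : Fin N → H) (w : Fin N → ℝ)
    (hw : ∀ n, 0 < w n) (hsum : ∑ n, w n = 1)
    (Ξ : H)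
    (hΞ : ∀ x : H, ∑ n, w n * dist Ξ (a n) ^ 2 ≤ ∑ n, w n * dist x (a n) ^ 2)
    (Y : ℕ → Ω → H) (hY_meas : ∀ k, Measurable (Y k))
    (hY_indep : iIndepFun Y μ)
    (hY_law : ∀ k : ℕ, 1 ≤ k →
      Measure.map (Y k) μ = ∑ n, ENNReal.ofReal (w n) • Measure.dirac (a n))
    (S : ℕ → Ω → H)
    (hS1 : ∀ ω, S 1 ω = Y 1 ω)
    (hSrec : ∀ k : ℕ, 1 ≤ k → ∀ ω : Ω,
      S (k + 1) ω = G.geo (S k ω) (Y (k + 1) ω) (1 / ((k : ℝ) + 1))) :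
    ∀ k : ℕ, 1 ≤ k →
      ∫ ω, dist Ξ (S k ω) ^ 2 ∂μ ≤ (∑ n, w n * dist Ξ (a n) ^ 2) / (k : ℝ) := by
  obtain ⟨n₀⟩ : Nonempty (Fin N) :=
    Fin.pos_iff_nonempty.mp (Nat.pos_of_ne_zero fun h => by subst h; simp at hsum)
  set law := ∑ n, ENNReal.ofReal (w n) • Measure.dirac (a n)
  set c := (Set.range a).retraction ⟨a n₀, n₀, rfl⟩
  have hc : Measurable c := measurable_retraction _ (Set.finite_range a).measurableSet
  set X : ℕ → Ω → Set.range a := fun i ω => c (Y (i + 1) ω)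
  have hlaw : ∀ i, HasLaw (X i) (law.map c) μ := fun i =>
    HasLaw.comp ⟨hc.aemeasurable, rfl⟩ ⟨(hY_meas _).aemeasurable, hY_law _ (by omega)⟩
  have hF : ∀ x, frechetFun Subtype.val (law.map c) x = ∑ n, w n * dist x (a n) ^ 2 := by
    intro x
    rw [frechetFun, integral_map hc.aemeasurable (measurable_of_finite _).aestronglyMeasurable,
      integral_sum_smul_dirac a w (fun n => (hw n).le)]
    simp [c, Set.coe_retraction_of_mem]
  have hS : ∀ k, S (k + 1) =ᵐ[μ] fun ω => G.inductiveMean k fun i => (X i ω : H) := by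
    intro k
    filter_upwards [ae_all_iff.mpr fun i => ae_mem_range_of_map_eq_sum_dirac a w
      (hY_meas (i + 1)) (hY_law _ (by omega))] with ω hω
    rw [← G.inductiveMean_eq_of_forall_succ_eq (s := (S · ω)) (y := (Y · ω)) (hS1 ω)
      (fun k hk => hSrec k hk ω) k]
    congr 1 with i
    exact (Set.coe_retraction_of_mem _ (hω i)).symm
  intro k hk
  obtain ⟨k, rfl⟩ := Nat.exists_eq_add_of_le' hk
  refine (integral_congr_ae ((hS k).fun_comp fun y => dist Ξ y ^ 2)).trans_le ?_
  have := G.integral_dist_sq_inductiveMean_le Subtype.val (fun i => hc.comp (hY_meas _))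
    ((hY_indep.comp (fun _ => c) (fun _ => hc)).precomp Nat.succ_injective) hlaw (Ξ := Ξ)
    (by simpa only [hF] using hΞ) k
  simpa [hF] using this

/-- Quantitative law of large numbers estimate in a Hadamard space (Sturm):
`E[d(Ξ, S_k)²] ≤ ξ / k`. -/
theorem lln_quantitative_estimate
    {H : Type*} [MetricSpace H] [CompleteSpace H]
    [MeasurableSpace H] [BorelSpace H]
    (G : Hadamard H)
    {Ω : Type*} {m0 : MeasurableSpace Ω} {μ : Measure Ω} [IsProbabilityMeasure μ]
    (N : ℕ) (a : Fin N → H) (w : Fin N → ℝ)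
    (hw : ∀ n, 0 < w n) (hsum : ∑ n, w n = 1)
    (Ξ : H)
    (hΞ : ∀ x : H, ∑ n, w n * dist Ξ (a n) ^ 2 ≤ ∑ n, w n * dist x (a n) ^ 2)
    (Y : ℕ → Ω → H) (hY_meas : ∀ k, Measurable (Y k))
    (hY_indep : iIndepFun Y μ)
    (hY_law : ∀ k : ℕ, 1 ≤ k →
      Measure.map (Y k) μ = ∑ n, ENNReal.ofReal (w n) • Measure.dirac (a n))
    (S : ℕ → Ω → H)
    (hS1 : ∀ ω, S 1 ω = Y 1 ω)
    (hSrec : ∀ k : ℕ, 1 ≤ k → ∀ ω : Ω,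
      S (k + 1) ω = G.geo (S k ω) (Y (k + 1) ω) (1 / ((k : ℝ) + 1))) :
    ∀ k : ℕ, 1 ≤ k →
      ∫ ω, dist Ξ (S k ω) ^ 2 ∂μ ≤ (∑ n, w n * dist Ξ (a n) ^ 2) / (k : ℝ) :=
  lln_quantitative_estimate_general G (m0 := m0) N a w hw hsum Ξ hΞ Y hY_meas hY_indep hY_law S hS1
    hSrec
end
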